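/- arXiv:2006.07013 — 3 statements merged into one kernel-verified Lean document; each statement's English description precedes it below -/
import Mathlib

section
/- Under the setup of the minibatch L-SVRG estimator: if in addition the family $\{f_i\}$ is average $L$-smooth, i.e., $\frac{1}{n}\sum_{i=1}^n \|\nabla f_i(x) - \nabla f_i(y)\|^2 \le L^2\|x-y\|^2$ for all $x,y$, then $\mathbb{E}[\|g\|^2] \le \frac{L^2}{b}\|x - w\|^2 + \|\nabla f(x)\|^2$. -/
/-!
Write `a i = ∇fᵢ(x) - ∇fᵢ(w)` and `ā` for its mean, so that `∇f(x) = ā + ∇f(w)` and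
`g = b⁻¹ ∑ₜ (a (jₜ) - ā) + ∇f(x)`. The summands `a (jₜ) - ā` are i.i.d. and centered, so all
cross terms vanish in expectation and `𝔼‖g‖² = b⁻¹ · (1/n) ∑ᵢ ‖aᵢ - ā‖² + ‖∇f(x)‖²`. Finally the
variance is at most the second moment `(1/n) ∑ᵢ ‖aᵢ‖²`, which average smoothness bounds by
`L² ‖x - w‖²`.
-/

open Finset
open scoped RealInnerProductSpace

namespace Fintype

variable {ι α : Type*} [Fintype ι] [DecidableEq ι] [Fintype α]

theorem sum_pi_apply (t : ι) {M : Type*} [AddCommMonoid M] (G : α → M) :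
    ∑ j : ι → α, G (j t) = card α ^ (card ι - 1) • ∑ i, G i := by
  simpa using sum_piFinset_apply G univ t

theorem sum_pi_sum_eq_zero {M : Type*} [AddCommMonoid M] {u : α → M} (hu : ∑ i, u i = 0) :
    ∑ j : ι → α, ∑ t, u (j t) = 0 := by
  rw [Finset.sum_comm]
  simp [sum_pi_apply, hu]

theorem sum_pi_apply_apply_eq_zero {M : Type*} [AddCommMonoid M] {s t : ι} (hst : s ≠ t)
    (Φ : α → α → M) (hΦ : ∀ q, ∑ p, Φ p q = 0) :
    ∑ j : ι → α, Φ (j s) (j t) = 0 := by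
  rw [← (Equiv.funSplitAt s α).symm.sum_comp, Fintype.sum_prod_type_right]
  simp [hst.symm, hΦ]

variable {E : Type*} [NormedAddCommGroup E] [InnerProductSpace ℝ E]

theorem sum_pi_norm_sum_sq_of_sum_eq_zero {u : α → E} (hu : ∑ i, u i = 0) :
    ∑ j : ι → α, ‖∑ t, u (j t)‖ ^ 2 =
      card ι * card α ^ (card ι - 1) * ∑ i, ‖u i‖ ^ 2 := by
  have hdiag : ∀ s : ι, ∑ t, ∑ j : ι → α, ⟪u (j s), u (j t)⟫ =
      card α ^ (card ι - 1) * ∑ i, ‖u i‖ ^ 2 := by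
    intro s
    rw [Finset.sum_eq_single s]
    · simp_rw [real_inner_self_eq_norm_sq]
      rw [sum_pi_apply s fun i => ‖u i‖ ^ 2, nsmul_eq_mul, Nat.cast_pow]
    · intro t _ hts
      exact sum_pi_apply_apply_eq_zero hts.symm (fun p q => ⟪u p, u q⟫) fun q => by
        rw [← sum_inner, hu, inner_zero_left]
    · simp
  simp_rw [← real_inner_self_eq_norm_sq, sum_inner, inner_sum]
  rw [Finset.sum_comm]
  simp_rw [Finset.sum_comm (s := (univ : Finset (ι → α))), hdiag]
  simp [mul_assoc]

end Fintype

section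

open Fintype

variable {ι α E : Type*} [Fintype ι] [DecidableEq ι] [Fintype α] [NormedAddCommGroup E] [InnerProductSpace ℝ E]

theorem sum_norm_sub_mean_sq (a : α → E) :
    ∑ i, ‖a i - (card α : ℝ)⁻¹ • ∑ k, a k‖ ^ 2 =
      ∑ i, ‖a i‖ ^ 2 - card α * ‖(card α : ℝ)⁻¹ • ∑ k, a k‖ ^ 2 := by
  rcases isEmpty_or_nonempty α with hα | hα
  · simp
  set μ := (card α : ℝ)⁻¹ • ∑ k, a k
  have hsum : ∑ k, a k = (card α : ℝ) • μ := by
    rw [smul_inv_smul₀ (by positivity)]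
  simp_rw [norm_sub_sq_real]
  rw [sum_add_distrib, sum_sub_distrib, ← mul_sum, ← sum_inner, hsum, real_inner_smul_left,
    real_inner_self_eq_norm_sq, sum_const, card_univ, nsmul_eq_mul]
  ring

theorem sum_norm_sub_mean_sq_le (a : α → E) :
    ∑ i, ‖a i - (card α : ℝ)⁻¹ • ∑ k, a k‖ ^ 2 ≤ ∑ i, ‖a i‖ ^ 2 := by
  rw [sum_norm_sub_mean_sq]
  exact sub_le_self _ (by positivity)

theorem mean_pi_norm_smul_sum_add_sq [Nonempty ι] [Nonempty α] (a : α → E) (m : E) :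
    ((card α : ℝ) ^ card ι)⁻¹ * ∑ j : ι → α, ‖(card ι : ℝ)⁻¹ • ∑ t, a (j t) + m‖ ^ 2 =
      (card ι : ℝ)⁻¹ * ((card α : ℝ)⁻¹ * ∑ i, ‖a i - (card α : ℝ)⁻¹ • ∑ k, a k‖ ^ 2) +
        ‖(card α : ℝ)⁻¹ • ∑ k, a k + m‖ ^ 2 := by
  have hα : (card α : ℝ) ≠ 0 := by positivity
  have hι : (card ι : ℝ) ≠ 0 := by positivity
  set μ := (card α : ℝ)⁻¹ • ∑ k, a k
  set u := fun i => a i - μ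
  have hu : ∑ i, u i = 0 := by
    simp only [u, sum_sub_distrib, sum_const, card_univ, μ, ← Nat.cast_smul_eq_nsmul ℝ,
      smul_inv_smul₀ hα, sub_self]
  have hcenter : ∀ j : ι → α,
      (card ι : ℝ)⁻¹ • ∑ t, a (j t) + m = (card ι : ℝ)⁻¹ • ∑ t, u (j t) + (μ + m) := by
    intro j
    simp only [u, sum_sub_distrib, sum_const, card_univ, ← Nat.cast_smul_eq_nsmul ℝ, smul_sub,
      inv_smul_smul₀ hι]
    abel
  have hcross : ∑ j : ι → α, ⟪(card ι : ℝ)⁻¹ • ∑ t, u (j t), μ + m⟫ = 0 := by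
    rw [← sum_inner, ← smul_sum, sum_pi_sum_eq_zero hu, smul_zero, inner_zero_left]
  have hpow : (card α : ℝ) ^ card ι = card α * card α ^ (card ι - 1) := by
    rw [← pow_succ', Nat.sub_add_cancel card_pos]
  simp_rw [hcenter]
  generalize μ + m = m' at hcross ⊢
  simp_rw [norm_add_sq_real, sum_add_distrib, ← mul_sum, hcross, norm_smul, mul_pow, ← mul_sum,
    sum_pi_norm_sum_sq_of_sum_eq_zero hu]
  simp only [u, norm_inv, RCLike.norm_natCast, mul_zero, add_zero, sum_const, card_univ, Fintype.card_pi,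
    prod_const, nsmul_eq_mul, Nat.cast_pow, hpow]
  field_simp

end

theorem gradient_const_mul_sum {ι F : Type*} [Fintype ι] [NormedAddCommGroup F]
    [InnerProductSpace ℝ F] [CompleteSpace F] {f : ι → F → ℝ} {x : F}
    (hf : ∀ i, DifferentiableAt ℝ (f i) x) (c : ℝ) :
    gradient (fun y => c * ∑ i, f i y) x = c • ∑ i, gradient (f i) x := by
  have hsum : HasFDerivAt (fun y => c * ∑ i, f i y) (c • ∑ i, fderiv ℝ (f i) x) x :=
    (HasFDerivAt.fun_sum fun i _ => (hf i).hasFDerivAt).const_mul c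
  simp [gradient, hsum.fderiv, map_sum]

theorem stmt_9_general (d n b : ℕ) (hn : 0 < n) (hb : 0 < b)
    (f : Fin n → EuclideanSpace ℝ (Fin d) → ℝ)
    (hdiff : ∀ i, Differentiable ℝ (f i))
    (L : ℝ)
    (havg : ∀ y z : EuclideanSpace ℝ (Fin d),
      (n : ℝ)⁻¹ * ∑ i, ‖gradient (f i) y - gradient (f i) z‖ ^ 2 ≤
        L ^ 2 * ‖y - z‖ ^ 2)
    (x w : EuclideanSpace ℝ (Fin d)) :
    ((n : ℝ) ^ b)⁻¹ *
        ∑ j : Fin b → Fin n,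
          ‖(b : ℝ)⁻¹ • ∑ t : Fin b, (gradient (f (j t)) x - gradient (f (j t)) w) +
              gradient (fun y => (n : ℝ)⁻¹ * ∑ i, f i y) w‖ ^ 2 ≤
      L ^ 2 / b * ‖x - w‖ ^ 2 +
        ‖gradient (fun y => (n : ℝ)⁻¹ * ∑ i, f i y) x‖ ^ 2 := by
  have : Nonempty (Fin n) := Fin.pos_iff_nonempty.mp hn
  have : Nonempty (Fin b) := Fin.pos_iff_nonempty.mp hb
  set a := fun i => gradient (f i) x - gradient (f i) w
  have hgrad : (n : ℝ)⁻¹ • ∑ i, a i + gradient (fun y => (n : ℝ)⁻¹ * ∑ i, f i y) w =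
      gradient (fun y => (n : ℝ)⁻¹ * ∑ i, f i y) x := by
    rw [gradient_const_mul_sum (fun i => (hdiff i).differentiableAt),
      gradient_const_mul_sum (fun i => (hdiff i).differentiableAt)]
    simp only [a, sum_sub_distrib, smul_sub, sub_add_cancel]
  have hmean := mean_pi_norm_smul_sum_add_sq (ι := Fin b) a
    (gradient (fun y => (n : ℝ)⁻¹ * ∑ i, f i y) w)
  simp only [Fintype.card_fin, hgrad] at hmean
  have hvar : (n : ℝ)⁻¹ * ∑ i, ‖a i - (n : ℝ)⁻¹ • ∑ k, a k‖ ^ 2 ≤ L ^ 2 * ‖x - w‖ ^ 2 := by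
    refine (mul_le_mul_of_nonneg_left ?_ (by positivity)).trans (havg x w)
    simpa using sum_norm_sub_mean_sq_le a
  rw [hmean, div_eq_inv_mul, mul_assoc]
  gcongr

/-- Second-moment bound for the minibatch L-SVRG gradient estimator under
average L-smoothness. -/
theorem stmt_9 (d n b : ℕ) (hn : 0 < n) (hb : 0 < b)
    (f : Fin n → EuclideanSpace ℝ (Fin d) → ℝ)
    (hdiff : ∀ i, Differentiable ℝ (f i))
    (L : ℝ) (hL : 0 ≤ L)
    (havg : ∀ y z : EuclideanSpace ℝ (Fin d),
      (n : ℝ)⁻¹ * ∑ i, ‖gradient (f i) y - gradient (f i) z‖ ^ 2 ≤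
        L ^ 2 * ‖y - z‖ ^ 2)
    (x w : EuclideanSpace ℝ (Fin d)) :
    ((n : ℝ) ^ b)⁻¹ *
        ∑ j : Fin b → Fin n,
          ‖(b : ℝ)⁻¹ • ∑ t : Fin b, (gradient (f (j t)) x - gradient (f (j t)) w) +
              gradient (fun y => (n : ℝ)⁻¹ * ∑ i, f i y) w‖ ^ 2 ≤
      L ^ 2 / b * ‖x - w‖ ^ 2 +
        ‖gradient (fun y => (n : ℝ)⁻¹ * ∑ i, f i y) x‖ ^ 2 :=
  stmt_9_general d n b hn hb f hdiff L havg x w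
end

section
/- Let $x, w, g \in \mathbb{R}^d$, $\eta > 0$, $p \in (0,1]$, and let $x^+ = x - \eta g$ with $g$ random satisfying $\mathbb{E}[g] = \nabla f(x)$. Let $w^+ = x$ with probability $p$ and $w^+ = w$ with probability $1-p$, independently. Then for every $\gamma > 0$: $\mathbb{E}[\|x^+ - w^+\|^2] \le (1-p)(1+\gamma)\|x - w\|^2 + \frac{(1-p)\eta^2}{\gamma}\|\nabla f(x)\|^2 + \eta^2 \mathbb{E}[\|g\|^2]$. -/
open MeasureTheory

/-! Expanding the square, unbiasedness turns the cross term of `E‖(x - w) - η g‖²` into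
`-2η⟪x - w, ∇f(x)⟫`, which Young's inequality bounds by `γ‖x - w‖² + η²/γ ‖∇f(x)‖²`;
the `p`-branch contributes exactly `η² E‖g‖²`. -/

section

variable {E : Type*} [NormedAddCommGroup E] [InnerProductSpace ℝ E]

theorem two_mul_real_inner_le_young (u v : E) {γ : ℝ} (hγ : 0 < γ) :
    2 * inner ℝ u v ≤ γ * ‖u‖ ^ 2 + γ⁻¹ * ‖v‖ ^ 2 :=
  calc 2 * inner ℝ u v ≤ 2 * ‖u‖ * ‖v‖ := by
        rw [mul_assoc]; exact mul_le_mul_of_nonneg_left (real_inner_le_norm u v) zero_le_two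
    _ ≤ γ * ‖u‖ ^ 2 + γ⁻¹ * ‖v‖ ^ 2 := two_mul_le_add_mul_sq hγ

variable [CompleteSpace E] {Ω : Type*} [MeasurableSpace Ω] {μ : Measure Ω}
  [IsProbabilityMeasure μ]

theorem integral_norm_sub_smul_sq {g : Ω → E} (hint : Integrable g μ)
    (hint2 : Integrable (fun ω => ‖g ω‖ ^ 2) μ) (z : E) (η : ℝ) :
    ∫ ω, ‖z - η • g ω‖ ^ 2 ∂μ =
      ‖z‖ ^ 2 - 2 * η * inner ℝ z (∫ ω, g ω ∂μ) + η ^ 2 * ∫ ω, ‖g ω‖ ^ 2 ∂μ := by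
  have hexpand : ∀ ω, ‖z - η • g ω‖ ^ 2 =
      ‖z‖ ^ 2 - 2 * η * inner ℝ z (g ω) + η ^ 2 * ‖g ω‖ ^ 2 := fun ω => by
    rw [norm_sub_sq_real, inner_smul_right, norm_smul, mul_pow, Real.norm_eq_abs, sq_abs]
    ring
  have hcross : Integrable (fun ω => 2 * η * inner ℝ z (g ω)) μ :=
    (hint.const_inner z).const_mul _
  have hfirst : Integrable (fun ω => ‖z‖ ^ 2 - 2 * η * inner ℝ z (g ω)) μ :=
    (integrable_const _).sub hcross
  simp_rw [hexpand]
  rw [integral_add hfirst (hint2.const_mul _),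
    integral_sub (integrable_const _) hcross, integral_const, integral_const_mul,
    integral_const_mul, integral_inner hint]
  simp

end

theorem stmt_11_general (d : ℕ) {Ω : Type*} [MeasurableSpace Ω]
    (μ : Measure Ω) [IsProbabilityMeasure μ]
    (f : EuclideanSpace ℝ (Fin d) → ℝ)
    (x w : EuclideanSpace ℝ (Fin d))
    (g : Ω → EuclideanSpace ℝ (Fin d))
    (hint : Integrable g μ) (hint2 : Integrable (fun ω => ‖g ω‖ ^ 2) μ)
    (hunbiased : (∫ ω, g ω ∂μ) = gradient f x)
    (η : ℝ) (p : ℝ) (hp1 : p ≤ 1)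
    (γ : ℝ) (hγ : 0 < γ) :
    p * (∫ ω, ‖(x - η • g ω) - x‖ ^ 2 ∂μ) +
        (1 - p) * (∫ ω, ‖(x - η • g ω) - w‖ ^ 2 ∂μ) ≤
      (1 - p) * (1 + γ) * ‖x - w‖ ^ 2 +
        (1 - p) * η ^ 2 / γ * ‖gradient f x‖ ^ 2 +
        η ^ 2 * (∫ ω, ‖g ω‖ ^ 2 ∂μ) := by
  simp_rw [sub_right_comm x _ w, sub_right_comm x _ x]
  rw [integral_norm_sub_smul_sq hint hint2, integral_norm_sub_smul_sq hint hint2, hunbiased]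
  have hyoung := two_mul_real_inner_le_young (x - w) (-(η • gradient f x)) hγ
  rw [inner_neg_right, inner_smul_right, norm_neg, norm_smul, mul_pow, Real.norm_eq_abs,
    sq_abs] at hyoung
  simp only [sub_self, norm_zero, inner_zero_left]
  rw [div_eq_mul_inv]
  linarith [mul_le_mul_of_nonneg_left hyoung (sub_nonneg.mpr hp1)]

/-- Key recursion controlling the L-SVRG reference-point drift: the expectation
over the joint randomness (gradient estimator g and independent Bernoulli(p)
update of the reference point) is bounded via Young's inequality. -/
theorem stmt_11 (d : ℕ) {Ω : Type*} [MeasurableSpace Ω]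
    (μ : Measure Ω) [IsProbabilityMeasure μ]
    (f : EuclideanSpace ℝ (Fin d) → ℝ) (hdiff : Differentiable ℝ f)
    (x w : EuclideanSpace ℝ (Fin d))
    (g : Ω → EuclideanSpace ℝ (Fin d))
    (hint : Integrable g μ) (hint2 : Integrable (fun ω => ‖g ω‖ ^ 2) μ)
    (hunbiased : (∫ ω, g ω ∂μ) = gradient f x)
    (η : ℝ) (hη : 0 < η) (p : ℝ) (hp0 : 0 < p) (hp1 : p ≤ 1)
    (γ : ℝ) (hγ : 0 < γ) :
    p * (∫ ω, ‖(x - η • g ω) - x‖ ^ 2 ∂μ) +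
        (1 - p) * (∫ ω, ‖(x - η • g ω) - w‖ ^ 2 ∂μ) ≤
      (1 - p) * (1 + γ) * ‖x - w‖ ^ 2 +
        (1 - p) * η ^ 2 / γ * ‖gradient f x‖ ^ 2 +
        η ^ 2 * (∫ ω, ‖g ω‖ ^ 2 ∂μ) :=
  stmt_11_general d μ f x w g hint hint2 hunbiased η p hp1 γ hγ
end

section
/- Suppose a random sequence $\{\sigma_k^2\}$ of nonnegative reals and nonnegative reals $F_k$ (with $F_k = f(x^k) - f^* \ge 0$) satisfy $\mathbb{E}_k[F_{k+1}] \le (1 + L\eta^2 A_1) F_k - (\eta - \tfrac{L\eta^2 B_1}{2})\|\nabla f(x^k)\|^2 + \tfrac{L\eta^2 D_1}{2}\sigma_k^2 + \tfrac{L\eta^2}{2}C_1$ and $\mathbb{E}_k[\sigma_{k+1}^2] \le (1-\rho)\sigma_k^2 + 2A_2 F_k + B_2 \|\nabla f(x^k)\|^2 + C_2$, with $\rho \in (0,1]$. Define $\alpha = \frac{L\eta^2 D_1}{2\rho}$ and the Lyapunov function $\Delta^k = F_k + \alpha \sigma_k^2$. Then $\mathbb{E}_k[\Delta^{k+1}]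 \le (1 + L\eta^2 A_1 + 2\alpha A_2)\Delta^k - \left(\eta - \tfrac{L\eta^2 B_1}{2} - \alpha B_2\right)\|\nabla f(x^k)\|^2 + \tfrac{L\eta^2}{2}C_1 + \alpha C_2$. -/
/-! Adding `α` times the `σ`-recursion to the `F`-recursion leaves `(c + α(1 - ρ)) σ₀` as the
`σ₀`-term, and the choice `αρ = c` makes this exactly `α σ₀`; since the new contraction factor
`a + αe` is at least `1`, this is at most `(a + αe) · α σ₀`. -/

theorem lyapunov_step_le {a b c d e f g ρ α F₀ F₁ σ₀ σ₁ G : ℝ}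
    (hα : 0 ≤ α) (hαρ : α * ρ = c) (hσ₀ : 0 ≤ σ₀) (hfactor : 1 ≤ a + α * e)
    (hF : F₁ ≤ a * F₀ - b * G + c * σ₀ + d)
    (hσ : σ₁ ≤ (1 - ρ) * σ₀ + e * F₀ + f * G + g) :
    F₁ + α * σ₁ ≤ (a + α * e) * (F₀ + α * σ₀) - (b - α * f) * G + d + α * g := by
  have hσ_coeff : c + α * (1 - ρ) = α := by rw [← hαρ]; ring
  have hσ_term : α * σ₀ ≤ (a + α * e) * (α * σ₀) :=
    le_mul_of_one_le_left (mul_nonneg hα hσ₀) hfactor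
  calc F₁ + α * σ₁
      ≤ (a * F₀ - b * G + c * σ₀ + d) + α * ((1 - ρ) * σ₀ + e * F₀ + f * G + g) :=
        add_le_add hF (mul_le_mul_of_nonneg_left hσ hα)
    _ = (a + α * e) * F₀ + (c + α * (1 - ρ)) * σ₀ - (b - α * f) * G + d + α * g := by ring
    _ ≤ (a + α * e) * (F₀ + α * σ₀) - (b - α * f) * G + d + α * g := by
        rw [hσ_coeff]; linarith

theorem stmt_16_general (L η ρ A₁ A₂ B₁ B₂ C₁ C₂ D₁ : ℝ)
    (hL : 0 < L) (hρ0 : 0 < ρ)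
    (hA₁ : 0 ≤ A₁) (hA₂ : 0 ≤ A₂) (hD₁ : 0 ≤ D₁)
    (F₀ F₁ σ₀ σ₁ G : ℝ)
    (hσ₀ : 0 ≤ σ₀)
    (hrecF : F₁ ≤ (1 + L * η ^ 2 * A₁) * F₀ - (η - L * η ^ 2 * B₁ / 2) * G +
      L * η ^ 2 * D₁ / 2 * σ₀ + L * η ^ 2 / 2 * C₁)
    (hrecσ : σ₁ ≤ (1 - ρ) * σ₀ + 2 * A₂ * F₀ + B₂ * G + C₂)
    (α : ℝ) (hα : α = L * η ^ 2 * D₁ / (2 * ρ)) :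
    F₁ + α * σ₁ ≤
      (1 + L * η ^ 2 * A₁ + 2 * α * A₂) * (F₀ + α * σ₀) -
        (η - L * η ^ 2 * B₁ / 2 - α * B₂) * G +
        L * η ^ 2 / 2 * C₁ + α * C₂ := by
  have hα0 : 0 ≤ α := by rw [hα]; positivity
  have hαρ : α * ρ = L * η ^ 2 * D₁ / 2 := by rw [hα]; field_simp
  have hfactor : 1 ≤ 1 + L * η ^ 2 * A₁ + α * (2 * A₂) := by
    have : 0 ≤ L * η ^ 2 * A₁ + α * (2 * A₂) := by positivity
    linarith
  have key := lyapunov_step_le hα0 hαρ hσ₀ hfactor hrecF hrecσ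
  linear_combination key

/-- Lyapunov construction at the heart of the unified main theorem: one step of
the recursions combines, with α = Lη²D₁/(2ρ), into a recursion for
Δ = F + ασ². (Conditional expectations are represented by their values.) -/
theorem stmt_16 (L η ρ A₁ A₂ B₁ B₂ C₁ C₂ D₁ : ℝ)
    (hL : 0 < L) (hη : 0 < η) (hρ0 : 0 < ρ) (hρ1 : ρ ≤ 1)
    (hA₁ : 0 ≤ A₁) (hA₂ : 0 ≤ A₂) (hB₁ : 0 ≤ B₁) (hB₂ : 0 ≤ B₂)
    (hC₁ : 0 ≤ C₁) (hC₂ : 0 ≤ C₂) (hD₁ : 0 ≤ D₁)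
    (F₀ F₁ σ₀ σ₁ G : ℝ)
    (hF₀ : 0 ≤ F₀) (hσ₀ : 0 ≤ σ₀) (hG : 0 ≤ G)
    (hrecF : F₁ ≤ (1 + L * η ^ 2 * A₁) * F₀ - (η - L * η ^ 2 * B₁ / 2) * G +
      L * η ^ 2 * D₁ / 2 * σ₀ + L * η ^ 2 / 2 * C₁)
    (hrecσ : σ₁ ≤ (1 - ρ) * σ₀ + 2 * A₂ * F₀ + B₂ * G + C₂)
    (α : ℝ) (hα : α = L * η ^ 2 * D₁ / (2 * ρ)) :
    F₁ + α * σ₁ ≤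
      (1 + L * η ^ 2 * A₁ + 2 * α * A₂) * (F₀ + α * σ₀) -
        (η - L * η ^ 2 * B₁ / 2 - α * B₂) * G +
        L * η ^ 2 / 2 * C₁ + α * C₂ :=
  stmt_16_general L η ρ A₁ A₂ B₁ B₂ C₁ C₂ D₁ hL hρ0 hA₁ hA₂ hD₁ F₀ F₁ σ₀ σ₁ G hσ₀ hrecF hrecσ α hα
end
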